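/- arXiv:2002.09622 — 4 statements merged into one kernel-verified Lean document; each statement's English description precedes it below -/
import Mathlib

section
/- Let M = (S,N,V) be a neighborhood model and for each w let Γ_w ⊆ {X ⊆ S | w ∉ X}. Define N⁺(w) = N(w) ∪ Γ_w and N⁻(w) = N(w) \ Γ_w. Then for every w ∈ S and every L(•)-formula α: M,w ⊨ α iff (S,N⁺,V),w ⊨ α, and M,w ⊨ α iff (S,N⁻,V),w ⊨ α. -/
structure NModel (S : Type) where
  N : S → Set (Set S)
  V : ℕ → Set S

/-- The language L(•). -/
inductive Form : Type where
  | atom : ℕ → Form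
  | neg : Form → Form
  | and : Form → Form → Form
  | dot : Form → Form

def sat {S : Type} (M : NModel S) : S → Form → Prop
  | s, .atom p => s ∈ M.V p
  | s, .neg φ => ¬ sat M s φ
  | s, .and φ ψ => sat M s φ ∧ sat M s ψ
  | s, .dot φ => sat M s φ ∧ {x | sat M x φ} ∉ M.N s

-- `•φ` at `w` only asks whether `⟦φ⟧ ∈ N w` once `w ∈ ⟦φ⟧` is known.
theorem sat_iff_of_agree_on_pointed_sets {S : Type} {N N' : S → Set (Set S)} {V : ℕ → Set S}
    (hN : ∀ w X, w ∈ X → (X ∈ N w ↔ X ∈ N' w)) (w : S) (α : Form) :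
    sat ⟨N, V⟩ w α ↔ sat ⟨N', V⟩ w α := by
  induction α generalizing w with
  | atom p => rfl
  | neg φ ih => exact not_congr (ih w)
  | and φ ψ ihφ ihψ => exact and_congr (ihφ w) (ihψ w)
  | dot φ ih =>
    have htruth : {x | sat ⟨N, V⟩ x φ} = {x | sat ⟨N', V⟩ x φ} := Set.ext ih
    simp only [sat, htruth, ← ih w]
    exact and_congr_right fun hw => not_congr (hN w _ (by rwa [← htruth]))

/-- Adding or removing neighborhoods not containing the evaluation point does not affect
truth of L(•)-formulas. -/
theorem dot_invariance_add_remove {S : Type} (N : S → Set (Set S)) (V : ℕ → Set S)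
    (Γ : S → Set (Set S)) (hΓ : ∀ w, ∀ X ∈ Γ w, w ∉ X) :
    ∀ (w : S) (α : Form),
      (sat ⟨N, V⟩ w α ↔ sat ⟨fun x => N x ∪ Γ x, V⟩ w α) ∧
      (sat ⟨N, V⟩ w α ↔ sat ⟨fun x => N x \ Γ x, V⟩ w α) := by
  intro w α
  have not_mem_Γ {w X} (hw : w ∈ X) : X ∉ Γ w := fun hX => hΓ w X hX hw
  exact ⟨sat_iff_of_agree_on_pointed_sets
      (fun w X hw => (or_iff_left (not_mem_Γ hw)).symm) w α,
    sat_iff_of_agree_on_pointed_sets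
      (fun w X hw => (and_iff_left (not_mem_Γ hw)).symm) w α⟩
end

section
/- The frame property of monotonicity (m) is not definable in L(•): there exist frames F and F' such that F is monotone, F' is not, and for all L(•)-formulas φ, F ⊨ φ iff F' ⊨ φ. -/
/-- Frame validity: `φ` holds at every state of every model based on the frame. -/
def frameValid {S : Type} (N : S → Set (Set S)) (φ : Form) : Prop :=
  ∀ (V : ℕ → Set S) (s : S), sat ⟨N, V⟩ s φ

def monotoneFrame {S : Type} (N : S → Set (Set S)) : Prop :=
  ∀ s (X Y : Set S), X ∈ N s → X ⊆ Y → Y ∈ N s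

/-!
The L(•)-satisfaction of `•φ` at `s` consults `N s` only at `⟦φ⟧`, and only when `s ∈ ⟦φ⟧`.
So neighbourhoods of a state that do not contain it are invisible to L(•). On a single point,
`N = ∅` is monotone while `N' = {∅}` is not, yet they differ only at `∅`, which contains no state.
-/

theorem sat_congr_of_forall_mem {S : Type} {N N' : S → Set (Set S)} (V : ℕ → Set S)
    (hN : ∀ s X, s ∈ X → (X ∈ N s ↔ X ∈ N' s)) (φ : Form) (s : S) :
    sat ⟨N, V⟩ s φ ↔ sat ⟨N', V⟩ s φ := by
  induction φ generalizing s with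
  | atom p => rfl
  | neg φ ih => exact not_congr (ih s)
  | and φ ψ ihφ ihψ => exact and_congr (ihφ s) (ihψ s)
  | dot φ ih =>
    have hext : {x | sat ⟨N, V⟩ x φ} = {x | sat ⟨N', V⟩ x φ} := Set.ext ih
    simp only [sat, hext, ih s]
    exact and_congr_right fun hs => not_congr (hN s {x | sat ⟨N', V⟩ x φ} hs)

theorem frameValid_congr_of_forall_mem {S : Type} {N N' : S → Set (Set S)}
    (hN : ∀ s X, s ∈ X → (X ∈ N s ↔ X ∈ N' s)) (φ : Form) :
    frameValid N φ ↔ frameValid N' φ :=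
  forall_congr' fun V => forall_congr' (sat_congr_of_forall_mem V hN φ)

/-- Monotonicity (m) is not definable in L(•): there are frames F (monotone) and F'
(not monotone) validating exactly the same L(•)-formulas. -/
theorem m_undefinable_in_dot :
    ∃ (S S' : Type) (_ : Nonempty S) (_ : Nonempty S')
      (N : S → Set (Set S)) (N' : S' → Set (Set S')),
      monotoneFrame N ∧ ¬ monotoneFrame N' ∧
      (∀ φ : Form, frameValid N φ ↔ frameValid N' φ) := by
  refine ⟨Unit, Unit, ⟨()⟩, ⟨()⟩, fun _ => ∅, fun _ => {∅}, ?_, ?_, ?_⟩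
  · intro s X Y hX _
    exact hX.elim
  · intro hmono
    exact Set.empty_ne_univ (hmono () ∅ Set.univ rfl (Set.empty_subset _)).symm
  · refine frameValid_congr_of_forall_mem fun s X hs => ?_
    have hX : X ≠ ∅ := Set.nonempty_iff_ne_empty.mp ⟨s, hs⟩
    simp [hX]
end

section
/- For the transitive closure construction on neighborhood frames: for all w ∈ S, if X ∈ N^tc(w) but X ∉ N(w), then w ∈ X. -/
/-- `m_{N}(X) = {z | X ∈ N(z)}`. -/
def mN {S : Type} (N : S → Set (Set S)) (X : Set S) : Set S := {z | X ∈ N z}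

/-- The iterated neighborhood functions `N_i`. -/
def Niter {S : Type} (N : S → Set (Set S)) : ℕ → S → Set (Set S)
  | 0 => N
  | i + 1 => fun w => Niter N i w ∪ (fun X => mN (Niter N i) X) '' Niter N i w

/-- The transitive closure `N^tc = ⋃_i N_i`. -/
def Ntc {S : Type} (N : S → Set (Set S)) (w : S) : Set (Set S) := ⋃ i, Niter N i w

/- Every set that enters `N_{i+1}(w)` without being in `N_i(w)` has the form `m_{N_i}(Y)` with
`Y ∈ N_i(w)`, and `w ∈ m_{N_i}(Y)` is exactly the statement `Y ∈ N_i(w)`. -/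

theorem mem_or_mem_of_mem_Niter {S : Type} {N : S → Set (Set S)} {w : S} {X : Set S} {i : ℕ}
    (h : X ∈ Niter N i w) : X ∈ N w ∨ w ∈ X := by
  induction i with
  | zero => exact Or.inl h
  | succ i ih =>
    rcases h with h | ⟨Y, hY, rfl⟩
    · exact ih h
    · exact Or.inr hY

theorem mem_or_mem_of_mem_Ntc {S : Type} {N : S → Set (Set S)} {w : S} {X : Set S}
    (h : X ∈ Ntc N w) : X ∈ N w ∨ w ∈ X :=
  let ⟨_, h⟩ := Set.mem_iUnion.mp h
  mem_or_mem_of_mem_Niter h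

/-- Every neighborhood in `N^tc(w)` not already in `N(w)` contains `w`. -/
theorem mem_of_mem_Ntc_not_mem {S : Type} (N : S → Set (Set S)) :
    ∀ (w : S) (X : Set S), X ∈ Ntc N w → X ∉ N w → w ∈ X :=
  fun _ _ hX hN => (mem_or_mem_of_mem_Ntc hX).resolve_left hN
end

section
/- On any monotone neighborhood model, the formula •φ → ••φ is valid: every unknown truth is itself an unknown truth. -/
def monotone' {S : Type} (M : NModel S) : Prop :=
  ∀ s (X Y : Set S), X ∈ M.N s → X ⊆ Y → Y ∈ M.N s

theorem setOf_sat_dot_subset {S : Type} (M : NModel S) (φ : Form) :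
    {x | sat M x (.dot φ)} ⊆ {x | sat M x φ} :=
  fun _ hx => hx.1

/-- `•φ → ••φ` is valid on every monotone neighborhood model. -/
theorem dot_implies_dotdot {S : Type} (M : NModel S) (hm : monotone' M) :
    ∀ (s : S) (φ : Form), sat M s (.dot φ) → sat M s (.dot (.dot φ)) := by
  intro s φ hdot
  refine ⟨hdot, fun hdotN => hdot.2 ?_⟩
  exact hm s _ _ hdotN (setOf_sat_dot_subset M φ)
end
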